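/- arXiv:1402.5165 — 4 statements merged into one kernel-verified Lean document; each statement's English description precedes it below -/
import Mathlib

section
/- Let S be a mixed-strategies solution of finite games. If S satisfies Strategic Equivalence (SE) and Pure Individual Rationality (PIR), then for every game u, every element of S(u) is a mixed Nash equilibrium of u, i.e. S(u) ⊆ NE(u). -/
open scoped Classical

noncomputable section

/-- A finite normal-form game on action sets `A i`: a payoff function for each player. -/
abbrev Game {n : ℕ} (A : Fin n → Type*) : Type _ :=
  Fin n → (∀ j, A j) → ℝ

/-- Opponents' action profiles of player `i`. -/
abbrev Opp {n : ℕ} (A : Fin n → Type*) (i : Fin n) : Type _ :=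
  ∀ j : {j : Fin n // j ≠ i}, A j.1

/-- The game `z(c, i, b₋ᵢ)`: player `i` receives payoff `c` at every profile whose
opponents' component equals `b`, and `0` otherwise; all other players always get `0`. -/
def zGame {n : ℕ} {A : Fin n → Type*} (c : ℝ) (i : Fin n) (b : Opp A i) : Game A :=
  fun j a => if j = i ∧ (∀ k : {k : Fin n // k ≠ i}, a k.1 = b k) then c else 0

/-- The full action profile obtained from own action `ai` of player `i` and an
opponents' profile `b`. -/
def merge {n : ℕ} {A : Fin n → Type*} (i : Fin n) (ai : A i) (b : Opp A i) : ∀ j, A j :=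
  fun j => if h : j = i then cast (congrArg A h.symm) ai else b ⟨j, h⟩

/-- The pure individually rational value of player `i`:
`pir_i(u) = max_{a_i} min_{a_{-i}} u_i(a_i, a_{-i})`. -/
def pir {n : ℕ} {A : Fin n → Type*} (u : Game A) (i : Fin n) : ℝ :=
  ⨆ ai : A i, ⨅ b : Opp A i, u i (merge i ai b)

/-- `a` is a pure Nash equilibrium of `u`. -/
def IsPNE {n : ℕ} {A : Fin n → Type*} (u : Game A) (a : ∀ j, A j) : Prop :=
  ∀ (i : Fin n) (bi : A i), u i (Function.update a i bi) ≤ u i a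

/-- A mixed-strategy profile: a probability distribution on `A i` for each player `i`. -/
abbrev MixedProfile {n : ℕ} (A : Fin n → Type*) [∀ i, Fintype (A i)] : Type _ :=
  {x : ∀ i, A i → ℝ // ∀ i, (∀ c, 0 ≤ x i c) ∧ ∑ c, x i c = 1}

/-- Multilinear extension of payoffs: the expected payoff of player `i` when each
player `j` independently plays the mixed strategy `x j`. -/
def Eu {n : ℕ} {A : Fin n → Type*} [∀ i, Fintype (A i)]
    (u : Game A) (i : Fin n) (x : ∀ j, A j → ℝ) : ℝ :=
  ∑ a : ∀ j, A j, (∏ j, x j (a j)) * u i a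

/-- The pure (Dirac) strategy on action `bi`. -/
def pureStrat {n : ℕ} {A : Fin n → Type*} {i : Fin n} (bi : A i) : A i → ℝ :=
  fun c => if c = bi then 1 else 0

/-!
Fix a profile `x ∈ S u`, a player `i` and a deviation `bi`. Subtracting, for every opponents'
profile `b`, the constant `u_i(bi, b)` from player `i`'s payoffs at `b` is allowed by SE, so `x`
is still a solution of the normalised game `w`. In `w` the action `bi` guarantees player `i`
exactly `0`, hence `pir_i(w) ≥ 0`, and PIR gives `u_i(x) - u_i(bi, x₋ᵢ) = w_i(x) ≥ 0`.
-/

section Payoffs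

variable {n : ℕ} {A : Fin n → Type*}

lemma piSplitAt_symm_eq_merge (i : Fin n) (ai : A i) (b : Opp A i) :
    (Equiv.piSplitAt i A).symm (ai, b) = merge i ai b := by
  ext j
  simp only [Equiv.piSplitAt_symm_apply, merge]
  grind

lemma merge_self (i : Fin n) (ai : A i) (b : Opp A i) : merge i ai b i = ai := by
  simp [merge]

lemma merge_of_ne (i : Fin n) (ai : A i) (b : Opp A i) (k : {k : Fin n // k ≠ i}) :
    merge i ai b k = b k := by
  simp [merge, k.2]

def oppProb (x : ∀ j, A j → ℝ) (i : Fin n) (b : Opp A i) : ℝ :=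
  ∏ k : {k : Fin n // k ≠ i}, x k (b k)

lemma oppProb_update_self (x : ∀ j, A j → ℝ) (i : Fin n) (s : A i → ℝ) :
    oppProb (Function.update x i s) i = oppProb x i := by
  funext b
  exact Finset.prod_congr rfl fun k _ => by rw [Function.update_of_ne k.2]

lemma eq_add_sum_zGame_of_strategicEquivalence {α : Type*} (S : Game A → α)
    (SE : ∀ (u : Game A) (c : ℝ) (i : Fin n) (b : Opp A i), S u = S (u + zGame c i b))
    (u : Game A) (i : Fin n) (c : Opp A i → ℝ) (s : Finset (Opp A i)) :
    S u = S (u + ∑ b ∈ s, zGame (c b) i b) := by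
  induction s using Finset.induction with
  | empty => simp
  | insert b s hbs ih => rw [Finset.sum_insert hbs, ← add_assoc, add_right_comm, ← SE, ih]

variable [∀ i, Fintype (A i)]

lemma sum_zGame_apply_self (i : Fin n) (c : Opp A i → ℝ) (a : ∀ j, A j) :
    (∑ b, zGame (c b) i b) i a = c (Equiv.piSplitAt i A a).2 := by
  have hmatch (b : Opp A i) : (∀ k, a k.1 = b k) ↔ (Equiv.piSplitAt i A a).2 = b :=
    funext_iff.symm
  simp only [Finset.sum_apply, zGame, true_and, hmatch, Finset.sum_ite_eq, Finset.mem_univ,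
    if_true]

lemma Eu_add (u v : Game A) (i : Fin n) (x : ∀ j, A j → ℝ) :
    Eu (u + v) i x = Eu u i x + Eu v i x := by
  simp only [Eu, Pi.add_apply, mul_add, Finset.sum_add_distrib]

lemma Eu_eq_sum_merge (u : Game A) (i : Fin n) (x : ∀ j, A j → ℝ) :
    Eu u i x = ∑ ai, x i ai * ∑ b, oppProb x i b * u i (merge i ai b) := by
  rw [Eu, ← (Equiv.piSplitAt i A).symm.sum_comp, Fintype.sum_prod_type]
  refine Finset.sum_congr rfl fun ai _ => ?_
  rw [Finset.mul_sum]
  refine Finset.sum_congr rfl fun b _ => ?_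
  simp only [piSplitAt_symm_eq_merge, Fintype.prod_eq_mul_prod_subtype_ne _ i, merge_self,
    merge_of_ne, oppProb]
  ring

lemma Eu_update_pureStrat (u : Game A) (i : Fin n) (x : ∀ j, A j → ℝ) (bi : A i) :
    Eu u i (Function.update x i (pureStrat bi)) = ∑ b, oppProb x i b * u i (merge i bi b) := by
  simp [Eu_eq_sum_merge, pureStrat, oppProb_update_self]

lemma Eu_of_apply_eq (v : Game A) (i : Fin n) (x : ∀ j, A j → ℝ) (hx : ∑ c, x i c = 1)
    (f : Opp A i → ℝ) (hv : ∀ a, v i a = f (Equiv.piSplitAt i A a).2) :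
    Eu v i x = ∑ b, oppProb x i b * f b := by
  simp [Eu_eq_sum_merge, hv, ← piSplitAt_symm_eq_merge, ← Finset.sum_mul, hx]

lemma iInf_le_pir (u : Game A) (i : Fin n) (ai : A i) :
    ⨅ b, u i (merge i ai b) ≤ pir u i :=
  le_ciSup (f := fun ai => ⨅ b, u i (merge i ai b)) (Set.finite_range _).bddAbove ai

end Payoffs

theorem statement1_general {n : ℕ} (A : Fin n → Type*)
    [∀ i, Fintype (A i)]
    (S : Game A → Set (MixedProfile A))
    (SE : ∀ (u : Game A) (c : ℝ) (i : Fin n) (b : Opp A i), S u = S (u + zGame c i b))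
    (PIR : ∀ u : Game A, ∀ x ∈ S u, ∀ i : Fin n, Eu u i x.1 ≥ pir u i) :
    ∀ u : Game A, ∀ x ∈ S u, ∀ (i : Fin n) (bi : A i),
      Eu u i x.1 ≥ Eu u i (Function.update x.1 i (pureStrat bi)) := by
  intro u x hx i bi
  set g : Opp A i → ℝ := fun b => u i (merge i bi b)
  set w : Game A := u + ∑ b, zGame (-g b) i b
  have hxw : x ∈ S w := eq_add_sum_zGame_of_strategicEquivalence S SE u i _ _ ▸ hx
  have hw_bi (b : Opp A i) : w i (merge i bi b) = 0 := by
    change u i _ + (∑ b, zGame (-g b) i b) i _ = 0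
    rw [sum_zGame_apply_self, ← piSplitAt_symm_eq_merge, Equiv.apply_symm_apply,
      piSplitAt_symm_eq_merge]
    exact add_neg_cancel _
  have hpir : 0 ≤ pir w i := by
    simpa only [hw_bi, Real.iInf_const_zero] using iInf_le_pir w i bi
  have hEw : Eu w i x.1 = Eu u i x.1 - Eu u i (Function.update x.1 i (pureStrat bi)) := by
    rw [Eu_add, Eu_of_apply_eq (∑ b, zGame (-g b) i b) i x.1 (x.2 i).2 (fun b => -g b)
      (sum_zGame_apply_self i _), Eu_update_pureStrat]
    simp only [g, mul_neg, Finset.sum_neg_distrib, sub_eq_add_neg]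
  linarith [PIR w x hxw i]

/-- Any mixed-strategies solution satisfying Strategic Equivalence (SE) and
Pure Individual Rationality (PIR) only outputs (mixed) Nash equilibria. -/
theorem statement1 {n : ℕ} (hn : 0 < n) (A : Fin n → Type*)
    [∀ i, Fintype (A i)] [∀ i, Nonempty (A i)]
    (S : Game A → Set (MixedProfile A))
    (SE : ∀ (u : Game A) (c : ℝ) (i : Fin n) (b : Opp A i), S u = S (u + zGame c i b))
    (PIR : ∀ u : Game A, ∀ x ∈ S u, ∀ i : Fin n, Eu u i x.1 ≥ pir u i) :
    ∀ u : Game A, ∀ x ∈ S u, ∀ (i : Fin n) (bi : A i),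
      Eu u i x.1 ≥ Eu u i (Function.update x.1 i (pureStrat bi)) :=
  statement1_general A S SE PIR
end
end

section
/- Let S be a correlated-strategies solution of finite games. If S satisfies Strategic Equivalence (SE) and the Simultaneous Maximizer axiom (SM), then for every game u and every pure Nash equilibrium a of u, the Dirac distribution δ_a ∈ Δ(A) concentrated on a belongs to S(u). -/
open scoped Classical

noncomputable section

/-- A correlated strategy: a probability distribution on the set `A` of action profiles. -/
abbrev CorrDist {n : ℕ} (A : Fin n → Type*) [∀ i, Fintype (A i)] : Type _ :=
  {x : (∀ j, A j) → ℝ // (∀ a, 0 ≤ x a) ∧ ∑ a, x a = 1}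

/-- The Dirac distribution concentrated on the profile `a`. -/
def diracDist {n : ℕ} {A : Fin n → Type*} [∀ i, Fintype (A i)] (a : ∀ j, A j) :
    CorrDist A :=
  ⟨fun b => if b = a then 1 else 0,
   ⟨fun b => by by_cases h : b = a <;> simp [h], by simp⟩⟩

def oppProfile {n : ℕ} {A : Fin n → Type*} (a : ∀ j, A j) (i : Fin n) : Opp A i :=
  fun k => a k.1

lemma merge_oppProfile {n : ℕ} {A : Fin n → Type*} (i : Fin n) (ai : A i) (a : ∀ j, A j) :
    merge i ai (oppProfile a i) = Function.update a i ai := by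
  funext j
  by_cases h : j = i
  · subst h; simp [merge, Function.update]
  · simp [merge, Function.update, oppProfile, h]

lemma apply_add_sum_eq_of_forall_apply_add_eq {M X ι : Type*} [AddCommMonoid M]
    (f : M → X) (g : ι → M) (h : ∀ u t, f (u + g t) = f u) (s : Finset ι) (u : M) :
    f (u + ∑ t ∈ s, g t) = f u := by
  induction s using Finset.cons_induction with
  | empty => simp
  | cons t s _ ih => rw [Finset.sum_cons, add_left_comm, add_comm, h, ih]

lemma sum_zGame_apply {n : ℕ} {A : Fin n → Type*} [∀ i, Fintype (A i)]
    (c : ∀ i, Opp A i → ℝ) (j : Fin n) (x : ∀ k, A k) :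
    (∑ t : Σ i, Opp A i, zGame (c t.1 t.2) t.1 t.2) j x = c j (oppProfile x j) := by
  rw [Finset.sum_apply, Finset.sum_apply, Finset.sum_eq_single ⟨j, oppProfile x j⟩]
  · simp [zGame, oppProfile]
  · rintro ⟨i, b⟩ - hne
    refine if_neg ?_
    rintro ⟨rfl, hb⟩
    exact hne (congrArg _ (funext fun k => (hb k).symm))
  · exact fun h => absurd (Finset.mem_univ _) h

section BestResponse

variable {n : ℕ} {A : Fin n → Type*} [∀ i, Fintype (A i)]

def bestResponseValue (u : Game A) (i : Fin n) (b : Opp A i) : ℝ :=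
  ⨆ ai : A i, u i (merge i ai b)

lemma le_bestResponseValue (u : Game A) (i : Fin n) (x : ∀ j, A j) :
    u i x ≤ bestResponseValue u i (oppProfile x i) := by
  have := le_ciSup (Set.finite_range fun ai => u i (merge i ai (oppProfile x i))).bddAbove (x i)
  rwa [merge_oppProfile, Function.update_eq_self] at this

lemma IsPNE.bestResponseValue_eq [∀ i, Nonempty (A i)] {u : Game A} {a : ∀ j, A j}
    (ha : IsPNE u a) (i : Fin n) :
    bestResponseValue u i (oppProfile a i) = u i a :=
  le_antisymm (ciSup_le fun ai => merge_oppProfile i ai a ▸ ha i ai)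
    (le_bestResponseValue u i a)

end BestResponse

theorem statement6_general {n : ℕ} (A : Fin n → Type*)
    [∀ i, Fintype (A i)] [∀ i, Nonempty (A i)]
    (S : Game A → Set (CorrDist A))
    (SE : ∀ (u : Game A) (c : ℝ) (i : Fin n) (b : Opp A i), S u = S (u + zGame c i b))
    (SM : ∀ (u : Game A) (a : ∀ j, A j),
      (∀ (i : Fin n) (b : ∀ j, A j), u i a ≥ u i b) → diracDist a ∈ S u) :
    ∀ u : Game A, ∀ a : ∀ j, A j, IsPNE u a → diracDist a ∈ S u := by
  intro u a ha
  -- Shifting each player's payoffs down by their best-response value (allowed by SE) makes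
  -- every payoff `≤ 0`, with equality at the equilibrium `a`, so SM applies.
  set v : Game A := u + ∑ t : Σ i, Opp A i,
    zGame (-bestResponseValue u t.1 t.2) t.1 t.2
  have hv : ∀ i x, v i x = u i x - bestResponseValue u i (oppProfile x i) := fun i x => by
    simp only [v, Pi.add_apply]
    rw [sum_zGame_apply (fun i b => -bestResponseValue u i b), sub_eq_add_neg]
  have hSv : S v = S u :=
    apply_add_sum_eq_of_forall_apply_add_eq S _ (fun u t => (SE u _ t.1 t.2).symm) _ u
  rw [← hSv]
  refine SM v a fun i x => ?_
  rw [hv, hv, ha.bestResponseValue_eq]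
  linarith [le_bestResponseValue u i x]

/-- Any correlated-strategies solution satisfying Strategic Equivalence (SE) and the
Simultaneous Maximizer axiom (SM) contains the Dirac distribution on every pure
Nash equilibrium. -/
theorem statement6 {n : ℕ} (hn : 0 < n) (A : Fin n → Type*)
    [∀ i, Fintype (A i)] [∀ i, Nonempty (A i)]
    (S : Game A → Set (CorrDist A))
    (SE : ∀ (u : Game A) (c : ℝ) (i : Fin n) (b : Opp A i), S u = S (u + zGame c i b))
    (SM : ∀ (u : Game A) (a : ∀ j, A j),
      (∀ (i : Fin n) (b : ∀ j, A j), u i a ≥ u i b) → diracDist a ∈ S u) :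
    ∀ u : Game A, ∀ a : ∀ j, A j, IsPNE u a → diracDist a ∈ S u :=
  statement6_general A S SE SM
end
end

section
/- Suppose there are at least two players whose action sets each contain at least two actions. Then there is no pure-strategies solution S of finite games that satisfies both Strategic Equivalence (SE) and the Unique Simultaneous Maximizer axiom (USM). -/
open scoped Classical

noncomputable section

/-!
Take profiles `a ≠ a'` that differ at two distinct players. In the game where every player
gets `1` at `a`, `1/2` at `a'` and `0` elsewhere, `a` is the unique simultaneous maximizer.
Adding `z(2, k, a'₋ₖ)` for every player `k` gives `k` a bonus `2` on the profiles agreeing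
with `a'` off `k`. As `a` differs from `a'` off every player, `a` gets no bonus, so `a'` becomes
the unique simultaneous maximizer. By SE both games have the same solution, contradicting USM.
-/

section

variable {n : ℕ} {A : Fin n → Type*}

def StrategicEquivalence (S : Game A → Set (∀ k, A k)) : Prop :=
  ∀ (u : Game A) (c : ℝ) (k : Fin n) (b : Opp A k), S u = S (u + zGame c k b)

def IsUniqueSimultaneousMaximizer (u : Game A) (a : ∀ k, A k) : Prop :=
  ∀ (k : Fin n) (b : ∀ l, A l), b ≠ a → u k a > u k b

def UniqueSimultaneousMaximizer (S : Game A → Set (∀ k, A k)) : Prop :=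
  ∀ (u : Game A) (a : ∀ k, A k), IsUniqueSimultaneousMaximizer u a → S u = {a}

def oppPart (k : Fin n) (a : ∀ l, A l) : Opp A k :=
  fun m => a m.1

theorem zGame_apply_self (c : ℝ) (k : Fin n) (b : Opp A k) (a : ∀ l, A l) :
    zGame c k b k a = if oppPart k a = b then c else 0 := by
  simp only [zGame, true_and, oppPart, funext_iff]

theorem zGame_apply_of_ne {c : ℝ} {k l : Fin n} (b : Opp A k) (a : ∀ l, A l) (hlk : l ≠ k) :
    zGame c k b l a = 0 :=
  if_neg fun h => hlk h.1

theorem sum_zGame_apply_s9 (c : ℝ) (b : ∀ k, Opp A k) (l : Fin n) (a : ∀ k, A k) :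
    (∑ k, zGame c k (b k)) l a = if oppPart l a = b l then c else 0 := by
  rw [Finset.sum_apply, Finset.sum_apply,
    Fintype.sum_eq_single l fun k hkl => zGame_apply_of_ne _ _ (Ne.symm hkl), zGame_apply_self]

theorem StrategicEquivalence.eq_add_sum {S : Game A → Set (∀ k, A k)}
    (hS : StrategicEquivalence S) (u : Game A) (s : Finset (Fin n)) (c : Fin n → ℝ)
    (b : ∀ k, Opp A k) : S u = S (u + ∑ k ∈ s, zGame (c k) k (b k)) := by
  induction s using Finset.induction_on with
  | empty => simp
  | insert k s hks ih =>
    rw [ih, hS _ (c k) k (b k), Finset.sum_insert hks, add_comm (zGame _ _ _), add_assoc]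

def twoPeakGame (a a' : ∀ k, A k) : Game A :=
  fun _ b => (if b = a then 1 else 0) + (if b = a' then 1 / 2 else 0)

theorem isUniqueSimultaneousMaximizer_twoPeakGame {a a' : ∀ k, A k} (hne : a ≠ a') :
    IsUniqueSimultaneousMaximizer (twoPeakGame a a') a := by
  intro k b hb
  simp only [twoPeakGame, if_neg hne, if_neg hb]
  split_ifs <;> norm_num

theorem isUniqueSimultaneousMaximizer_twoPeakGame_add {a a' : ∀ k, A k}
    (hdiff : ∀ k, ∃ l ≠ k, a l ≠ a' l) :
    IsUniqueSimultaneousMaximizer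
      (twoPeakGame a a' + ∑ k, zGame 2 k (oppPart k a')) a' := by
  intro k b hb
  have hne : a' ≠ a := fun h => by obtain ⟨l, -, hl⟩ := hdiff k; exact hl (congrFun h l).symm
  simp only [Pi.add_apply, sum_zGame_apply_s9, twoPeakGame, if_neg hne, if_neg hb]
  by_cases hbk : oppPart k b = oppPart k a'
  · have hba : b ≠ a := by
      rintro rfl
      obtain ⟨l, hlk, hl⟩ := hdiff k
      exact hl (congrFun hbk ⟨l, hlk⟩)
    simp only [if_pos hbk, if_neg hba]
    norm_num
  · rw [if_neg hbk]
    split_ifs <;> norm_num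

theorem not_strategicEquivalence_and_uniqueSimultaneousMaximizer {a a' : ∀ k, A k}
    {i j : Fin n} (hij : i ≠ j) (hi : a i ≠ a' i) (hj : a j ≠ a' j)
    (S : Game A → Set (∀ k, A k)) :
    ¬ (StrategicEquivalence S ∧ UniqueSimultaneousMaximizer S) := by
  rintro ⟨hSE, hUSM⟩
  have hdiff : ∀ k, ∃ l ≠ k, a l ≠ a' l := fun k => by
    by_cases hki : k = i
    · exact ⟨j, hki ▸ hij.symm, hj⟩
    · exact ⟨i, Ne.symm hki, hi⟩
  have hne : a ≠ a' := fun h => hi (congrFun h i)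
  have hSa := hUSM _ _ (isUniqueSimultaneousMaximizer_twoPeakGame hne)
  have hSa' := hUSM _ _ (isUniqueSimultaneousMaximizer_twoPeakGame_add hdiff)
  rw [← hSE.eq_add_sum, hSa, Set.singleton_eq_singleton_iff] at hSa'
  exact hne hSa'

theorem exists_profiles_ne_ne [∀ k, Nonempty (A k)] {i j : Fin n} (hij : i ≠ j)
    (hi : ∃ x x' : A i, x ≠ x') (hj : ∃ y y' : A j, y ≠ y') :
    ∃ a a' : ∀ k, A k, a i ≠ a' i ∧ a j ≠ a' j := by
  obtain ⟨x, x', hx⟩ := hi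
  obtain ⟨y, y', hy⟩ := hj
  let d : ∀ k, A k := fun _ => Classical.arbitrary _
  refine ⟨Function.update (Function.update d i x) j y,
    Function.update (Function.update d i x') j y', ?_, ?_⟩ <;>
  simpa [Function.update_of_ne hij]

end

/-- If at least two players have at least two actions each, then no pure-strategies
solution satisfies both Strategic Equivalence (SE) and the Unique Simultaneous
Maximizer axiom (USM). -/
theorem statement9 {n : ℕ} (A : Fin n → Type*)
    [∀ i, Fintype (A i)] [∀ i, Nonempty (A i)]
    (i j : Fin n) (hij : i ≠ j)
    (hi : 1 < Fintype.card (A i)) (hj : 1 < Fintype.card (A j)) :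
    ¬ ∃ S : Game A → Set (∀ k, A k),
      (∀ (u : Game A) (c : ℝ) (k : Fin n) (b : Opp A k), S u = S (u + zGame c k b)) ∧
      (∀ (u : Game A) (a : ∀ k, A k),
        (∀ (k : Fin n) (b : ∀ l, A l), b ≠ a → u k a > u k b) → S u = {a}) := by
  rintro ⟨S, hS⟩
  obtain ⟨a, a', hai, haj⟩ := exists_profiles_ne_ne hij
    (Fintype.exists_pair_of_one_lt_card hi) (Fintype.exists_pair_of_one_lt_card hj)
  exact not_strategicEquivalence_and_uniqueSimultaneousMaximizer hij hai haj S hS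
end
end

section
/- Let S be a pure-strategies solution of continuous convex games on compact convex action sets. If S satisfies Continuous Strategic Equivalence (CSE) and the Simultaneous Maximizer axiom (SM), then for every continuous convex game u, every pure Nash equilibrium of u belongs to S(u), i.e. PNE(u) ⊆ S(u). -/
/-!
Subtract from every player's payoff his best-reply value
`f_i(a₋ᵢ) = max_x u_i(x, a₋ᵢ)`, which is continuous in `a₋ᵢ` because `A_i` is compact.
By CSE this leaves `S(u)` unchanged. In the new game every payoff is `≤ 0`, and at a pure
Nash equilibrium every payoff is `0`, so the equilibrium is a simultaneous maximizer and
lies in `S(u)` by SM.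
-/

open scoped Classical

noncomputable section

variable {n : ℕ} {E : Fin n → Type*}
  [∀ i, NormedAddCommGroup (E i)] [∀ i, NormedSpace ℝ (E i)]

/-- Action profiles: one action from each player's action set `A i`. -/
abbrev CProfile (A : ∀ i, Set (E i)) : Type _ := ∀ j, ↥(A j)

/-- A game with action sets `A i`: a payoff function for each player. -/
abbrev CGame (A : ∀ i, Set (E i)) : Type _ := Fin n → CProfile A → ℝ

/-- Opponents' action profiles of player `i`. -/
abbrev COpp (A : ∀ i, Set (E i)) (i : Fin n) : Type _ :=
  ∀ j : {j : Fin n // j ≠ i}, ↥(A j.1)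

/-- The game `z(i, f)`: player `i` receives payoff `f(a₋ᵢ)` at every profile `a`
(irrespective of his own action); every other player always gets `0`. -/
def zC (A : ∀ i, Set (E i)) (i : Fin n) (f : COpp A i → ℝ) : CGame A :=
  fun j a => if j = i then f (fun k => a k.1) else 0

/-- The full profile obtained from own action `ai` of player `i` and an opponents'
profile `b`. -/
def mergeC (A : ∀ i, Set (E i)) (i : Fin n) (ai : ↥(A i)) (b : COpp A i) :
    CProfile A :=
  fun j => if h : j = i then cast (congrArg (fun t => ↥(A t)) h.symm) ai else b ⟨j, h⟩

/-- The pure individually rational value of player `i`: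
`pir_i(u) = max_{a_i} min_{a_{-i}} u_i(a_i, a_{-i})`. -/
def pirC (A : ∀ i, Set (E i)) (u : CGame A) (i : Fin n) : ℝ :=
  ⨆ ai : ↥(A i), ⨅ b : COpp A i, u i (mergeC A i ai b)

/-- A continuous convex game: each payoff function is continuous, and each player's
payoff is a convex function of his own action (for every fixed opponents' profile). -/
def IsCCGame (A : ∀ i, Set (E i)) (hconv : ∀ i, Convex ℝ (A i)) (u : CGame A) : Prop :=
  (∀ i, Continuous (u i)) ∧
  ∀ (i : Fin n) (a : CProfile A) (x y : ↥(A i)) (s t : ℝ)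
    (hs : 0 ≤ s) (ht : 0 ≤ t) (hst : s + t = 1),
    u i (Function.update a i ⟨s • (x : E i) + t • (y : E i),
        hconv i x.2 y.2 hs ht hst⟩) ≤
      s * u i (Function.update a i x) + t * u i (Function.update a i y)

/-- `a` is a pure Nash equilibrium of `u`. -/
def IsPNEc (A : ∀ i, Set (E i)) (u : CGame A) (a : CProfile A) : Prop :=
  ∀ (i : Fin n) (bi : ↥(A i)), u i (Function.update a i bi) ≤ u i a

/-- `a` is a strict pure Nash equilibrium of `u`. -/
def IsStrictPNEc (A : ∀ i, Set (E i)) (u : CGame A) (a : CProfile A) : Prop :=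
  ∀ (i : Fin n) (bi : ↥(A i)), bi ≠ a i → u i (Function.update a i bi) < u i a


section Profiles

variable {n : ℕ} {E : Fin n → Type*}

lemma mergeC_restrict (A : ∀ i, Set (E i)) (i : Fin n) (x : ↥(A i)) (a : CProfile A) :
    mergeC A i x (fun k => a k.1) = Function.update a i x := by
  funext j
  by_cases h : j = i
  · subst h; simp [mergeC]
  · simp [mergeC, h]

lemma continuous_mergeC [∀ i, TopologicalSpace (E i)] (A : ∀ i, Set (E i)) (i : Fin n) :
    Continuous fun p : ↥(A i) × COpp A i => mergeC A i p.1 p.2 := by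
  refine continuous_pi fun j => ?_
  by_cases h : j = i
  · subst h
    simpa [mergeC] using continuous_fst
  · simp only [mergeC, dif_neg h]
    exact (continuous_apply _).comp continuous_snd

lemma zC_apply_self_update (A : ∀ i, Set (E i)) (i : Fin n) (f : COpp A i → ℝ)
    (a : CProfile A) (x : ↥(A i)) :
    zC A i f i (Function.update a i x) = f (fun k => a k.1) := by
  simp only [zC, ↓reduceIte]
  congr 1
  funext k
  exact Function.update_of_ne k.2 _ a

lemma zC_apply_of_ne (A : ∀ i, Set (E i)) {i j : Fin n} (h : j ≠ i) (f : COpp A i → ℝ) :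
    zC A i f j = 0 := by
  funext a
  simp [zC, h]

lemma sum_zC_apply (A : ∀ i, Set (E i)) (g : ∀ i, COpp A i → ℝ) (i : Fin n)
    (a : CProfile A) :
    (∑ j, zC A j (g j)) i a = g i (fun k => a k.1) := by
  simp [Finset.sum_apply, zC]

end Profiles

section Game

variable {n : ℕ} {E : Fin n → Type*} [∀ i, NormedAddCommGroup (E i)] [∀ i, NormedSpace ℝ (E i)]
  {A : ∀ i, Set (E i)} {hconv : ∀ i, Convex ℝ (A i)} {u : CGame A}

lemma IsCCGame.add_zC (hu : IsCCGame A hconv u) (i : Fin n) {f : COpp A i → ℝ}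
    (hf : Continuous f) : IsCCGame A hconv (u + zC A i f) := by
  refine ⟨fun j => ?_, fun j a x y s t hs ht hst => ?_⟩
  · by_cases h : j = i
    · subst h
      show Continuous fun a => u j a + zC A j f j a
      simp only [zC, ↓reduceIte]
      exact (hu.1 j).add (hf.comp (continuous_pi fun k => continuous_apply _))
    · simpa [zC_apply_of_ne A h] using hu.1 j
  · by_cases h : j = i
    · subst h
      simp only [Pi.add_apply, zC_apply_self_update]
      have hconvex := hu.2 j a x y s t hs ht hst
      have hsplit : f (fun k => a k.1) = s * f (fun k => a k.1) + t * f (fun k => a k.1) := by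
        rw [← add_mul, hst, one_mul]
      linarith
    · simpa [zC_apply_of_ne A h] using hu.2 j a x y s t hs ht hst

lemma IsCCGame.add_sum_zC (hu : IsCCGame A hconv u) {g : ∀ i, COpp A i → ℝ}
    (hg : ∀ i, Continuous (g i)) (s : Finset (Fin n)) :
    IsCCGame A hconv (u + ∑ i ∈ s, zC A i (g i)) := by
  induction s using Finset.induction_on with
  | empty => simpa using hu
  | insert i s hi ih =>
    rw [Finset.sum_insert hi, add_left_comm, add_comm]
    exact ih.add_zC i (hg i)

lemma solution_add_sum_zC {S : CGame A → Set (CProfile A)}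
    (CSE : ∀ u : CGame A, IsCCGame A hconv u →
      ∀ (i : Fin n) (f : COpp A i → ℝ), Continuous f → S u = S (u + zC A i f))
    (hu : IsCCGame A hconv u) {g : ∀ i, COpp A i → ℝ} (hg : ∀ i, Continuous (g i))
    (s : Finset (Fin n)) :
    S (u + ∑ i ∈ s, zC A i (g i)) = S u := by
  induction s using Finset.induction_on with
  | empty => simp
  | insert i s hi ih =>
    rw [Finset.sum_insert hi, add_left_comm, add_comm,
      ← CSE _ (hu.add_sum_zC hg s) i _ (hg i), ih]

end Game

section BestReply

variable {n : ℕ} {E : Fin n → Type*} [∀ i, TopologicalSpace (E i)]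

def bestReplyValue (A : ∀ i, Set (E i)) (u : CGame A) (i : Fin n) (b : COpp A i) : ℝ :=
  ⨆ x : ↥(A i), u i (mergeC A i x b)

variable {A : ∀ i, Set (E i)} [∀ i, CompactSpace ↥(A i)] {u : CGame A} {i : Fin n}

lemma continuous_bestReplyValue (hu : Continuous (u i)) :
    Continuous (bestReplyValue A u i) := by
  have := isCompact_univ.continuous_sSup (f := fun b (x : ↥(A i)) => u i (mergeC A i x b))
    (hu.comp ((continuous_mergeC A i).comp continuous_swap))
  simp only [Set.image_univ] at this
  exact this

lemma le_bestReplyValue (hu : Continuous (u i)) (a : CProfile A) :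
    u i a ≤ bestReplyValue A u i (fun k => a k.1) := by
  have hcont : Continuous fun x : ↥(A i) => u i (mergeC A i x (fun k => a k.1)) :=
    hu.comp ((continuous_mergeC A i).comp (.prodMk_left fun k : {j // j ≠ i} => a k.1))
  have := le_ciSup (isCompact_range hcont).bddAbove (a i)
  rwa [mergeC_restrict, Function.update_eq_self] at this

lemma bestReplyValue_eq_of_isPNEc (hu : Continuous (u i)) {a : CProfile A}
    (ha : IsPNEc A u a) : bestReplyValue A u i (fun k => a k.1) = u i a := by
  have : Nonempty ↥(A i) := ⟨a i⟩
  refine le_antisymm (ciSup_le fun x => ?_) (le_bestReplyValue hu a)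
  rw [mergeC_restrict]
  exact ha i x

end BestReply

theorem statement15_general {n : ℕ} {E : Fin n → Type*}
    [∀ i, NormedAddCommGroup (E i)] [∀ i, NormedSpace ℝ (E i)]
    (A : ∀ i, Set (E i)) (hA : ∀ i, IsCompact (A i)) (hconv : ∀ i, Convex ℝ (A i))
    (S : CGame A → Set (CProfile A))
    (CSE : ∀ u : CGame A, IsCCGame A hconv u →
      ∀ (i : Fin n) (f : COpp A i → ℝ), Continuous f → S u = S (u + zC A i f))
    (SM : ∀ u : CGame A, IsCCGame A hconv u → ∀ a : CProfile A,
      (∀ (i : Fin n) (b : CProfile A), u i a ≥ u i b) → a ∈ S u) :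
    ∀ u : CGame A, IsCCGame A hconv u → ∀ a : CProfile A, IsPNEc A u a → a ∈ S u := by
  intro u hu a ha
  have : ∀ i, CompactSpace ↥(A i) := fun i => isCompact_iff_compactSpace.mp (hA i)
  set g : ∀ i, COpp A i → ℝ := fun i b => -bestReplyValue A u i b
  have hg : ∀ i, Continuous (g i) := fun i => (continuous_bestReplyValue (hu.1 i)).neg
  rw [← solution_add_sum_zC CSE hu hg Finset.univ]
  refine SM _ (hu.add_sum_zC hg _) a fun i c => ?_
  simp only [Pi.add_apply, sum_zC_apply, g, bestReplyValue_eq_of_isPNEc (hu.1 i) ha]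
  linarith [le_bestReplyValue (hu.1 i) c]

/-- Any pure-strategies solution of continuous convex games satisfying Continuous
Strategic Equivalence (CSE) and the Simultaneous Maximizer axiom (SM) contains
every pure Nash equilibrium. -/
theorem statement15 {n : ℕ} (hn : 0 < n) {E : Fin n → Type*}
    [∀ i, NormedAddCommGroup (E i)] [∀ i, NormedSpace ℝ (E i)]
    (A : ∀ i, Set (E i)) (hA : ∀ i, IsCompact (A i)) (hconv : ∀ i, Convex ℝ (A i))
    (hne : ∀ i, (A i).Nonempty)
    (S : CGame A → Set (CProfile A))
    (CSE : ∀ u : CGame A, IsCCGame A hconv u →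
      ∀ (i : Fin n) (f : COpp A i → ℝ), Continuous f → S u = S (u + zC A i f))
    (SM : ∀ u : CGame A, IsCCGame A hconv u → ∀ a : CProfile A,
      (∀ (i : Fin n) (b : CProfile A), u i a ≥ u i b) → a ∈ S u) :
    ∀ u : CGame A, IsCCGame A hconv u → ∀ a : CProfile A, IsPNEc A u a → a ∈ S u :=
  statement15_general A hA hconv S CSE SM
end
end
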